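/- D(P,Q) equals the minimum partition cost: for finite nonempty P, Q ⊂ R^m, the dominance move D(P,Q) (minimum total L1 move distance of points of P so that the moved set weakly dominates Q) equals the minimum over all partitions S = (p_{s1}, Q_{s1}), ..., (p_{sn}, Q_{sn}) of P to Q (p_{si} ∈ P, Q_{si} ⊆ Q, ∪_i Q_{si} = Q) of Σ_i d(p_{si}, Q_{si}). -/

import Mathlib

open Finset

/-- A point in `ℝ^m`. -/
abbrev Pt (m : ℕ) := Fin m → ℝ

/-- `p` weakly dominates `q` (minimization): componentwise `≤`. -/
def wdom {m : ℕ} (p q : Pt m) : Prop := ∀ i, p i ≤ q i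

/-- `p` dominates `q`: componentwise `≤` with at least one strict inequality. -/
def sdom {m : ℕ} (p q : Pt m) : Prop := wdom p q ∧ ∃ i, p i < q i

/-- Set `P` weakly dominates set `Q`: every `q ∈ Q` is weakly dominated by some `p ∈ P`. -/
def setWDom {m : ℕ} (P Q : Finset (Pt m)) : Prop := ∀ q ∈ Q, ∃ p ∈ P, wdom p q

/-- L1 (Manhattan) distance between points. -/
noncomputable def l1 {m : ℕ} (p q : Pt m) : ℝ := ∑ j, |p j - q j|

/-- The dominance move `D(P,Q)`: the minimum total L1 move distance of points of `P`
(each `p` moved to `f p`) so that the moved set weakly dominates `Q`. -/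
noncomputable def DoM {m : ℕ} (P Q : Finset (Pt m)) : ℝ :=
  sInf { c | ∃ f : Pt m → Pt m, setWDom (P.image f) Q ∧ c = ∑ p ∈ P, l1 p (f p) }

/-- `d(p, S)`: the minimum L1 move of `p` needed to weakly dominate all of `S`,
namely `Σ_j (p^j − min({p^j} ∪ {s^j : s ∈ S}))`. -/
noncomputable def dCost {m : ℕ} (p : Pt m) (S : Finset (Pt m)) : ℝ :=
  ∑ j, (p j - (insert p S).inf' (insert_nonempty p S) (fun s => s j))

/-- `d(a, b)` between two points: `Σ_j (a^j − min(a^j, b^j))`. -/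
noncomputable def dpt {m : ℕ} (a b : Pt m) : ℝ := ∑ j, (a j - min (a j) (b j))

/-- `b` is an inward neighbor of `q` in `R`: `b ∈ R \ {q}` minimizes `d(·, q)`. -/
def isNb {m : ℕ} (R : Finset (Pt m)) (q b : Pt m) : Prop :=
  b ∈ R.erase q ∧ ∀ r ∈ R.erase q, dpt b q ≤ dpt r q

/-- The union of the point-sets of a list of groups. -/
noncomputable def unionSnd {m : ℕ} (S : List (Pt m × Finset (Pt m))) : Finset (Pt m) :=
  S.foldr (fun g acc => g.2 ∪ acc) ∅

/-- `S` is a partition of `P` to `Q`: each group is a point of `P` together with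
a subset of `Q`, and the subsets cover `Q`. -/
def IsPartition {m : ℕ} (P Q : Finset (Pt m)) (S : List (Pt m × Finset (Pt m))) : Prop :=
  (∀ g ∈ S, g.1 ∈ P ∧ g.2 ⊆ Q) ∧ unionSnd S = Q

/-- Total cost of a partition: the sum of the group costs `d(p_s, Q_s)`. -/
noncomputable def pcost {m : ℕ} (S : List (Pt m × Finset (Pt m))) : ℝ :=
  (S.map (fun g => dCost g.1 g.2)).sum

/-!
A move `f` of `P` that weakly dominates `Q` yields a partition by sending each `q ∈ Q` to
a point `p` whose image `f p` weakly dominates it; the group of `p` then costs at most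
`l1 p (f p)`, since `f p` weakly dominates that whole group. Conversely, a partition yields
a move by sending each `p` to the ideal point of `p` and all the groups attached to `p`,
which costs exactly `d(p, ⋃ groups of p)`, and `d(p, ·)` is subadditive under unions.
-/

section DominanceCost

variable {m : ℕ}

/-- The componentwise minimum of `{p} ∪ S`, i.e. the L1-nearest point to `p` that weakly
dominates `S`. -/
noncomputable def idealPoint (p : Pt m) (S : Finset (Pt m)) : Pt m :=
  fun j => (insert p S).inf' (insert_nonempty p S) (fun s => s j)

lemma idealPoint_le_self (p : Pt m) (S : Finset (Pt m)) (j : Fin m) : idealPoint p S j ≤ p j :=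
  inf'_le _ (mem_insert_self p S)

lemma wdom_idealPoint {p q : Pt m} {S : Finset (Pt m)} (hq : q ∈ S) : wdom (idealPoint p S) q :=
  fun _ => inf'_le _ (mem_insert_of_mem hq)

lemma idealPoint_union (p : Pt m) (A B : Finset (Pt m)) (j : Fin m) :
    idealPoint p (A ∪ B) j = min (idealPoint p A j) (idealPoint p B j) := by
  simp only [idealPoint, insert_union_distrib]
  exact inf'_union _ _ _

lemma dCost_eq_sum_sub_idealPoint (p : Pt m) (S : Finset (Pt m)) :
    dCost p S = ∑ j, (p j - idealPoint p S j) := rfl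

lemma l1_idealPoint (p : Pt m) (S : Finset (Pt m)) : l1 p (idealPoint p S) = dCost p S :=
  sum_congr rfl fun j _ => abs_of_nonneg (sub_nonneg.mpr (idealPoint_le_self p S j))

@[simp]
lemma dCost_empty (p : Pt m) : dCost p ∅ = 0 := by
  simp [dCost]

lemma dCost_union_le (p : Pt m) (A B : Finset (Pt m)) :
    dCost p (A ∪ B) ≤ dCost p A + dCost p B := by
  simp only [dCost_eq_sum_sub_idealPoint, ← sum_add_distrib, idealPoint_union]
  refine sum_le_sum fun j _ => ?_
  have hA := idealPoint_le_self p A j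
  have hB := idealPoint_le_self p B j
  rcases min_choice (idealPoint p A j) (idealPoint p B j) with h | h <;> rw [h] <;> linarith

lemma dCost_le_l1_of_forall_wdom {p x : Pt m} {S : Finset (Pt m)} (h : ∀ q ∈ S, wdom x q) :
    dCost p S ≤ l1 p x := by
  rw [dCost_eq_sum_sub_idealPoint]
  refine sum_le_sum fun j _ => ?_
  have hmin : min (p j) (x j) ≤ idealPoint p S j :=
    le_inf' _ _ fun s hs => by
      rcases mem_insert.mp hs with rfl | hs
      · exact min_le_left _ _
      · exact (min_le_right _ _).trans (h s hs j)
  rcases min_choice (p j) (x j) with hm | hm <;> rw [hm] at hmin <;>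
    linarith [abs_nonneg (p j - x j), le_abs_self (p j - x j)]

end DominanceCost

section Partition

variable {m : ℕ}

lemma unionSnd_cons (g : Pt m × Finset (Pt m)) (S : List (Pt m × Finset (Pt m))) :
    unionSnd (g :: S) = g.2 ∪ unionSnd S := rfl

lemma mem_unionSnd {q : Pt m} {S : List (Pt m × Finset (Pt m))} :
    q ∈ unionSnd S ↔ ∃ g ∈ S, q ∈ g.2 := by
  induction S with
  | nil => simp [unionSnd]
  | cons g S ih => simp [unionSnd_cons, ih]

lemma pcost_cons (g : Pt m × Finset (Pt m)) (S : List (Pt m × Finset (Pt m))) :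
    pcost (g :: S) = dCost g.1 g.2 + pcost S := by
  simp [pcost]

noncomputable def groupOf (S : List (Pt m × Finset (Pt m))) (p : Pt m) : Finset (Pt m) :=
  unionSnd (S.filter (·.1 = p))

lemma groupOf_cons (g : Pt m × Finset (Pt m)) (S : List (Pt m × Finset (Pt m))) (p : Pt m) :
    groupOf (g :: S) p = (if g.1 = p then g.2 else ∅) ∪ groupOf S p := by
  by_cases h : g.1 = p <;> simp [groupOf, h, unionSnd_cons]

lemma mem_groupOf_self {q : Pt m} {g : Pt m × Finset (Pt m)} {S : List (Pt m × Finset (Pt m))}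
    (hg : g ∈ S) (hq : q ∈ g.2) : q ∈ groupOf S g.1 :=
  mem_unionSnd.mpr ⟨g, List.mem_filter.mpr ⟨hg, by simp⟩, hq⟩

lemma sum_dCost_groupOf_le_pcost {P : Finset (Pt m)} {S : List (Pt m × Finset (Pt m))}
    (hS : ∀ g ∈ S, g.1 ∈ P) : ∑ p ∈ P, dCost p (groupOf S p) ≤ pcost S := by
  induction S with
  | nil => simp [groupOf, unionSnd, pcost]
  | cons g S ih =>
    have hstep : ∀ p ∈ P, dCost p (groupOf (g :: S) p)
        ≤ (if g.1 = p then dCost g.1 g.2 else 0) + dCost p (groupOf S p) := fun p _ => by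
      rw [groupOf_cons]
      refine (dCost_union_le _ _ _).trans (add_le_add_left ?_ _)
      split_ifs with h
      · rw [h]
      · simp
    calc ∑ p ∈ P, dCost p (groupOf (g :: S) p)
        ≤ ∑ p ∈ P, ((if g.1 = p then dCost g.1 g.2 else 0) + dCost p (groupOf S p)) :=
          sum_le_sum hstep
      _ ≤ dCost g.1 g.2 + pcost S := by
          rw [sum_add_distrib, sum_ite_eq, if_pos (hS g List.mem_cons_self)]
          exact add_le_add_right (ih fun g' hg' => hS g' (List.mem_cons_of_mem g hg')) _
      _ = pcost (g :: S) := (pcost_cons g S).symm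

lemma exists_move_le_pcost {P Q : Finset (Pt m)} {S : List (Pt m × Finset (Pt m))}
    (hS : IsPartition P Q S) :
    ∃ f : Pt m → Pt m, setWDom (P.image f) Q ∧ ∑ p ∈ P, l1 p (f p) ≤ pcost S := by
  obtain ⟨hSmem, hScover⟩ := hS
  refine ⟨fun p => idealPoint p (groupOf S p), fun q hq => ?_, ?_⟩
  · obtain ⟨g, hg, hqg⟩ := mem_unionSnd.mp (hScover ▸ hq)
    exact ⟨_, mem_image_of_mem _ (hSmem g hg).1, wdom_idealPoint (mem_groupOf_self hg hqg)⟩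
  · simpa only [l1_idealPoint] using sum_dCost_groupOf_le_pcost fun g hg => (hSmem g hg).1

lemma exists_partition_le_of_setWDom {P Q : Finset (Pt m)} {f : Pt m → Pt m}
    (hf : setWDom (P.image f) Q) :
    ∃ S, IsPartition P Q S ∧ pcost S ≤ ∑ p ∈ P, l1 p (f p) := by
  have hch : ∀ q ∈ Q, ∃ p ∈ P, wdom (f p) q := fun q hq => by
    obtain ⟨x, hx, hxq⟩ := hf q hq
    obtain ⟨p, hp, rfl⟩ := mem_image.mp hx
    exact ⟨p, hp, hxq⟩
  choose! ch hchP hchW using hch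
  refine ⟨P.toList.map fun p => (p, Q.filter (ch · = p)), ⟨?_, ?_⟩, ?_⟩
  · simp only [List.mem_map, mem_toList]
    rintro _ ⟨p, hp, rfl⟩
    exact ⟨hp, filter_subset _ _⟩
  · ext q
    simp only [mem_unionSnd, List.mem_map, mem_toList]
    constructor
    · rintro ⟨_, ⟨p, _, rfl⟩, hq⟩
      exact (mem_filter.mp hq).1
    · exact fun hq => ⟨_, ⟨ch q, hchP q hq, rfl⟩, mem_filter.mpr ⟨hq, rfl⟩⟩
  · rw [pcost, List.map_map, sum_map_toList]
    refine sum_le_sum fun p _ => dCost_le_l1_of_forall_wdom fun q hq => ?_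
    obtain ⟨hqQ, rfl⟩ := mem_filter.mp hq
    exact hchW q hqQ

end Partition

theorem stmt19_general {m : ℕ} (P Q : Finset (Pt m)) :
    DoM P Q = sInf { c | ∃ S, IsPartition P Q S ∧ c = pcost S } := by
  refine csInf_eq_csInf_of_forall_exists_le ?_ ?_
  · rintro _ ⟨f, hf, rfl⟩
    obtain ⟨S, hS, hcost⟩ := exists_partition_le_of_setWDom hf
    exact ⟨_, ⟨S, hS, rfl⟩, hcost⟩
  · rintro _ ⟨S, hS, rfl⟩
    obtain ⟨f, hf, hcost⟩ := exists_move_le_pcost hS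
    exact ⟨_, ⟨f, hf, rfl⟩, hcost⟩

theorem stmt19 {m : ℕ} (P Q : Finset (Pt m)) (hP : P.Nonempty) (hQ : Q.Nonempty) :
    DoM P Q = sInf { c | ∃ S, IsPartition P Q S ∧ c = pcost S } :=
  stmt19_general P Q
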